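/- arXiv:1507.05831 — 3 statements merged into one kernel-verified Lean document; each statement's English description precedes it below -/
import Mathlib

section
/- For every real P > 0 there exist constants C₄, C₅ > 0 such that for all real numbers l, L, a, g with 0 < l ≤ P, 0 ≤ L ≤ P, l/4 ≤ a ≤ l/2, and cosh(L/2) = sinh(g) · sinh(a), one has C₄ ≤ exp(g) · l ≤ C₅. -/
open Real

/-- `sinh t ≤ t * exp t` for `t ≥ 0`. -/
lemma sinh_le_mul_exp {t : ℝ} (ht : 0 ≤ t) : Real.sinh t ≤ t * Real.exp t := by
  rw [Real.sinh_eq]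
  have h1 : 1 - 2 * t ≤ Real.exp (-(2 * t)) := by
    have := Real.add_one_le_exp (-(2 * t)); linarith
  have hpos2 : 0 < Real.exp (2 * t) := Real.exp_pos _
  have key : Real.exp (2 * t) - 1 ≤ 2 * t * Real.exp (2 * t) := by
    have h2 : Real.exp (-(2 * t)) * Real.exp (2 * t) = 1 := by
      rw [← Real.exp_add]; simp
    nlinarith [mul_le_mul_of_nonneg_right h1 hpos2.le]
  have hexpneg : 0 < Real.exp (-t) := Real.exp_pos _
  have h3 : Real.exp (-t) * Real.exp (2 * t) = Real.exp t := by
    rw [← Real.exp_add]; ring_nf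
  have h4 : Real.exp (-t) * Real.exp t = 1 := by rw [← Real.exp_add]; simp
  nlinarith [mul_le_mul_of_nonneg_left key hexpneg.le]

/-- Right-angled pentagon estimate: for every `P > 0` there are constants
`C₄, C₅ > 0` such that whenever `0 < l ≤ P`, `0 ≤ L ≤ P`, `l/4 ≤ a ≤ l/2` and
`cosh (L/2) = sinh g * sinh a`, one has `C₄ ≤ exp g * l ≤ C₅`. -/
theorem pentagon_estimate (P : ℝ) (hP : 0 < P) :
    ∃ C₄ C₅ : ℝ, 0 < C₄ ∧ 0 < C₅ ∧
      ∀ l L a g : ℝ, 0 < l → l ≤ P → 0 ≤ L → L ≤ P → l / 4 ≤ a → a ≤ l / 2 →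
        Real.cosh (L / 2) = Real.sinh g * Real.sinh a →
        C₄ ≤ Real.exp g * l ∧ Real.exp g * l ≤ C₅ := by
  refine ⟨2 / Real.exp P, P + 8 * Real.cosh (P / 2), by positivity,
    by positivity, fun l L a g hl hlP hL hLP hal hau heq => ?_⟩
  have ha : 0 < a := lt_of_lt_of_le (by linarith) hal
  have hsa : 0 < Real.sinh a := Real.sinh_pos_iff.mpr ha
  have hcL1 : 1 ≤ Real.cosh (L / 2) := Real.one_le_cosh _
  have hsg : 0 < Real.sinh g := by
    have hprod : 0 < Real.sinh g * Real.sinh a := by rw [← heq]; linarith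
    nlinarith
  have hg : 0 < g := Real.sinh_pos_iff.mp hsg
  -- exp g bounds from sinh g
  have hexp_lb : Real.sinh g ≤ Real.exp g := by
    have := Real.sinh_add_cosh g
    have h1 : 1 ≤ Real.cosh g := Real.one_le_cosh g
    linarith
  have hexp_ub : Real.exp g ≤ 2 * Real.sinh g + 1 := by
    have h1 := Real.cosh_sub_sinh g
    have h2 := Real.sinh_add_cosh g
    have h3 : Real.exp (-g) ≤ 1 := by
      rw [Real.exp_le_one_iff]; linarith
    linarith
  constructor
  · -- lower bound: sinh a ≤ (l/2) exp(l/2) ≤ (l/2) exp P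
    have h1 : Real.sinh a ≤ Real.sinh (l / 2) := Real.sinh_le_sinh.mpr hau
    have h2 : Real.sinh (l / 2) ≤ (l / 2) * Real.exp (l / 2) :=
      sinh_le_mul_exp (by linarith)
    have h3 : Real.exp (l / 2) ≤ Real.exp P := Real.exp_le_exp.mpr (by linarith)
    have hsaub : Real.sinh a ≤ (l / 2) * Real.exp P := by
      nlinarith
    -- sinh g * sinh a = cosh(L/2) ≥ 1
    have h4 : 1 ≤ Real.sinh g * Real.sinh a := by rw [← heq]; linarith
    have hEP : 0 < Real.exp P := Real.exp_pos P
    rw [div_le_iff₀ hEP]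
    -- want 2 ≤ exp g * l * exp P
    have h5 : 1 ≤ Real.sinh g * ((l / 2) * Real.exp P) :=
      le_trans h4 (mul_le_mul_of_nonneg_left hsaub hsg.le)
    nlinarith [mul_le_mul_of_nonneg_right hexp_lb (mul_nonneg hl.le hEP.le)]
  · -- upper bound
    have h1 : Real.sinh (l / 4) ≤ Real.sinh a := Real.sinh_le_sinh.mpr hal
    have h2 : l / 4 ≤ Real.sinh (l / 4) := Real.self_le_sinh_iff.mpr (by linarith)
    have h3 : Real.cosh (L / 2) ≤ Real.cosh (P / 2) := by
      rw [Real.cosh_le_cosh]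
      rw [abs_of_nonneg (by linarith), abs_of_nonneg (by linarith)]
      linarith
    -- sinh g = cosh(L/2)/sinh a ≤ cosh(P/2)/(l/4)
    have h4 : Real.sinh g * (l / 4) ≤ Real.cosh (P / 2) := by
      calc Real.sinh g * (l / 4) ≤ Real.sinh g * Real.sinh a :=
            mul_le_mul_of_nonneg_left (by linarith) hsg.le
        _ = Real.cosh (L / 2) := heq.symm
        _ ≤ Real.cosh (P / 2) := h3
    -- exp g * l ≤ (2 sinh g + 1) * l = 2 sinh g * l + l ≤ 8 cosh(P/2) + P
    nlinarith [mul_le_mul_of_nonneg_right hexp_ub hl.le]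
end

section
/- For every real P > 0 there exist constants C₁, C₂ > 0 such that for all real numbers l, L, g with 0 < l ≤ P, 0 ≤ L ≤ P, g ≥ 0, and cosh(g) · sinh(l/2)² = cosh(L) + cosh(l/2)², one has C₁ ≤ exp(g) · l² ≤ C₂. -/
/-!
Since `cosh g ≤ exp g ≤ 2 cosh g` for `g ≥ 0`, it suffices to bound `cosh g * l ^ 2`. On `[0, P]`
the function `sinh (l / 2)` is comparable to `l / 2`, with ratio between `1` and `cosh (P / 2)`, so
`cosh g * l ^ 2` is comparable to `4 cosh g * sinh (l / 2) ^ 2 = 4 (cosh L + cosh (l / 2) ^ 2)`,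
which lies between `8` and `4 (cosh P + cosh (P / 2) ^ 2)`.
-/

namespace Real

lemma cosh_le_exp_of_nonneg {x : ℝ} (hx : 0 ≤ x) : cosh x ≤ exp x := by
  rw [← cosh_add_sinh]
  exact le_add_of_nonneg_right (sinh_nonneg_iff.mpr hx)

lemma exp_le_two_mul_cosh (x : ℝ) : exp x ≤ 2 * cosh x := by
  rw [cosh_eq]
  linarith [exp_pos (-x)]

lemma cosh_le_cosh_of_nonneg_of_le {x y : ℝ} (hx : 0 ≤ x) (hxy : x ≤ y) :
    cosh x ≤ cosh y := by
  rw [cosh_le_cosh, abs_of_nonneg hx, abs_of_nonneg (hx.trans hxy)]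
  exact hxy

lemma sinh_le_mul_cosh {x : ℝ} (hx : 0 ≤ x) : sinh x ≤ x * cosh x := by
  have hderiv : ∀ t ∈ interior (Set.Icc 0 x), deriv sinh t ≤ cosh x := by
    intro t ht
    rw [interior_Icc] at ht
    rw [deriv_sinh]
    exact cosh_le_cosh_of_nonneg_of_le ht.1.le ht.2.le
  have hmvt := (convex_Icc 0 x).image_sub_le_mul_sub_of_deriv_le continuous_sinh.continuousOn
    differentiable_sinh.differentiableOn hderiv 0 (Set.left_mem_Icc.mpr hx) x
    (Set.right_mem_Icc.mpr hx) hx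
  rw [sinh_zero] at hmvt
  linarith

lemma sq_le_four_mul_sinh_half_sq {l : ℝ} (hl : 0 ≤ l) : l ^ 2 ≤ 4 * sinh (l / 2) ^ 2 := by
  have h : l / 2 ≤ sinh (l / 2) := self_le_sinh_iff.mpr (by positivity)
  nlinarith

lemma four_mul_sinh_half_sq_le {l P : ℝ} (hl : 0 ≤ l) (hlP : l ≤ P) :
    4 * sinh (l / 2) ^ 2 ≤ cosh (P / 2) ^ 2 * l ^ 2 := by
  have hsinh : sinh (l / 2) ≤ l / 2 * cosh (P / 2) :=
    (sinh_le_mul_cosh (by positivity)).trans <| by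
      gcongr
      exact cosh_le_cosh_of_nonneg_of_le (by positivity) (by linarith)
  have hsinh_nonneg : 0 ≤ sinh (l / 2) := sinh_nonneg_iff.mpr (by positivity)
  nlinarith [pow_le_pow_left₀ hsinh_nonneg hsinh 2]

lemma two_le_cosh_add_cosh_sq (x y : ℝ) : 2 ≤ cosh x + cosh y ^ 2 := by
  nlinarith [one_le_cosh x, one_le_cosh y]

lemma cosh_add_cosh_half_sq_le {l L P : ℝ} (hl : 0 ≤ l) (hlP : l ≤ P) (hL : 0 ≤ L)
    (hLP : L ≤ P) : cosh L + cosh (l / 2) ^ 2 ≤ cosh P + cosh (P / 2) ^ 2 := by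
  have hcosh_half : cosh (l / 2) ≤ cosh (P / 2) :=
    cosh_le_cosh_of_nonneg_of_le (by positivity) (by linarith)
  have := pow_le_pow_left₀ (cosh_pos _).le hcosh_half 2
  linarith [cosh_le_cosh_of_nonneg_of_le hL hLP]

end Real

open Real

theorem hexagon_estimate_general (P : ℝ) :
    ∃ C₁ C₂ : ℝ, 0 < C₁ ∧ 0 < C₂ ∧
      ∀ l L g : ℝ, 0 < l → l ≤ P → 0 ≤ L → L ≤ P → 0 ≤ g →
        Real.cosh g * Real.sinh (l / 2) ^ 2 = Real.cosh L + Real.cosh (l / 2) ^ 2 →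
        C₁ ≤ Real.exp g * l ^ 2 ∧ Real.exp g * l ^ 2 ≤ C₂ := by
  have hc : 0 < cosh (P / 2) ^ 2 := by positivity
  refine ⟨8 / cosh (P / 2) ^ 2, 8 * (cosh P + cosh (P / 2) ^ 2), by positivity,
    by linarith [two_le_cosh_add_cosh_sq P (P / 2)], ?_⟩
  intro l L g hl hlP hL hLP hg hhex
  constructor
  · rw [div_le_iff₀ hc]
    calc 8 ≤ 4 * (cosh L + cosh (l / 2) ^ 2) := by linarith [two_le_cosh_add_cosh_sq L (l / 2)]
      _ = cosh g * (4 * sinh (l / 2) ^ 2) := by rw [← hhex]; ring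
      _ ≤ cosh g * (cosh (P / 2) ^ 2 * l ^ 2) :=
        mul_le_mul_of_nonneg_left (four_mul_sinh_half_sq_le hl.le hlP) (cosh_pos g).le
      _ ≤ exp g * l ^ 2 * cosh (P / 2) ^ 2 := by
        rw [mul_left_comm, mul_comm _ (cosh _ ^ 2)]
        gcongr
        exact cosh_le_exp_of_nonneg hg
  · calc exp g * l ^ 2 ≤ 2 * cosh g * l ^ 2 := by gcongr; exact exp_le_two_mul_cosh g
      _ ≤ 2 * cosh g * (4 * sinh (l / 2) ^ 2) := by
        gcongr; exact sq_le_four_mul_sinh_half_sq hl.le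
      _ = 8 * (cosh L + cosh (l / 2) ^ 2) := by rw [← hhex]; ring
      _ ≤ 8 * (cosh P + cosh (P / 2) ^ 2) := by
        linarith [cosh_add_cosh_half_sq_le hl.le hlP hL hLP]

/-- Right-angled hexagon estimate: for every `P > 0` there are constants
`C₁, C₂ > 0` such that whenever `0 < l ≤ P`, `0 ≤ L ≤ P`, `g ≥ 0` and
`cosh g * sinh (l/2) ^ 2 = cosh L + cosh (l/2) ^ 2`, one has
`C₁ ≤ exp g * l ^ 2 ≤ C₂`. -/
theorem hexagon_estimate (P : ℝ) (hP : 0 < P) :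
    ∃ C₁ C₂ : ℝ, 0 < C₁ ∧ 0 < C₂ ∧
      ∀ l L g : ℝ, 0 < l → l ≤ P → 0 ≤ L → L ≤ P → 0 ≤ g →
        Real.cosh g * Real.sinh (l / 2) ^ 2 = Real.cosh L + Real.cosh (l / 2) ^ 2 →
        C₁ ≤ Real.exp g * l ^ 2 ∧ Real.exp g * l ^ 2 ≤ C₂ :=
  hexagon_estimate_general P
end

section
/- For all real numbers J > 1 and C > 0 there exists a real C' > 0 such that for all real x, y, u with x < 0, 1/J ≤ log(1 + 1/(−x)) ≤ J, x ≤ y < 0, and u ≥ exp(C), one has log( ((u − y)/(−y)) / ((1 − x)/(−x)) ) ≥ C'. -/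
/-- Cross-ratio inequality from the twist part of the proof of Theorem 1:
for `J > 1` and `C > 0` there is `C' > 0` such that for all `x < 0` with
`1/J ≤ log (1 + 1/(-x)) ≤ J`, all `y` with `x ≤ y < 0`, and all `u ≥ exp C`,
one has `log (((u - y)/(-y)) / ((1 - x)/(-x))) ≥ C'`. -/
theorem cross_ratio_lower_bound (J C : ℝ) (hJ : 1 < J) (hC : 0 < C) :
    ∃ C' : ℝ, 0 < C' ∧
      ∀ x y u : ℝ, x < 0 →
        1 / J ≤ Real.log (1 + 1 / (-x)) → Real.log (1 + 1 / (-x)) ≤ J →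
        x ≤ y → y < 0 → Real.exp C ≤ u →
        C' ≤ Real.log (((u - y) / (-y)) / ((1 - x) / (-x))) := by
  obtain ⟨t0, ht0def⟩ : ∃ t0 : ℝ, t0 = Real.exp (1/J) - 1 := ⟨_, rfl⟩
  have hJ0 : (0:ℝ) < 1/J := by positivity
  have ht0 : 0 < t0 := by
    have := Real.one_lt_exp_iff.mpr hJ0
    rw [ht0def]
    have := Real.one_lt_exp_iff.mpr hJ0
    linarith
  have heC : (1:ℝ) < Real.exp C := Real.one_lt_exp_iff.mpr hC
  refine ⟨Real.log (1 + Real.exp C * t0) - 1/J, ?_, ?_⟩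
  · have h1 : Real.exp (1/J) < 1 + Real.exp C * t0 := by nlinarith
    have := (Real.lt_log_iff_exp_lt (by positivity)).mpr h1
    linarith
  · intro x y u hx hL1 hL2 hxy hy hu
    set a : ℝ := -x with hadef
    set b : ℝ := -y with hbdef
    have ha : 0 < a := by simp [hadef]; linarith
    have hb : 0 < b := by simp [hbdef]; linarith
    have hba : b ≤ a := by simp [hadef, hbdef]; linarith
    set t : ℝ := 1/a with htdef
    have ht : 0 < t := by positivity
    have hu0 : 0 < u := lt_of_lt_of_le (Real.exp_pos C) hu
    -- t ≥ t0
    have htge : t0 ≤ t := by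
      have h1 : Real.exp (1/J) ≤ 1 + t :=
        (Real.le_log_iff_exp_le (by positivity)).mp hL1
      rw [ht0def]; linarith
    -- u/b ≥ exp C * t
    have hub : Real.exp C * t ≤ u / b := by
      have h1 : Real.exp C / a ≤ u / a := by gcongr
      have h2 : u / a ≤ u / b := div_le_div_of_nonneg_left hu0.le hb hba
      calc Real.exp C * t = Real.exp C / a := by rw [htdef]; ring
        _ ≤ u / b := le_trans h1 h2
    -- rewrite the goal
    have hnum : (u - y) / (-y) = 1 + u / b := by
      rw [hbdef]; field_simp [hy.ne]; ring
    have hden : (1 - x) / (-x) = 1 + t := by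
      rw [htdef, hadef]; field_simp [hx.ne]; ring
    rw [hnum, hden]
    have hP : (0:ℝ) < 1 + u / b := by positivity
    have hQ : (0:ℝ) < 1 + t := by positivity
    rw [Real.log_div hP.ne' hQ.ne']
    have hLt : Real.log (1 + 1 / (-x)) = Real.log (1 + t) := by rw [htdef, hadef]
    -- log (1 + u/b) ≥ log (1 + exp C * t)
    have h3 : Real.log (1 + Real.exp C * t) ≤ Real.log (1 + u / b) :=
      Real.log_le_log (by positivity) (by linarith)
    -- monotonicity step
    have h4 : Real.log (1 + Real.exp C * t0) - Real.log (1 + t0) ≤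
        Real.log (1 + Real.exp C * t) - Real.log (1 + t) := by
      rw [← Real.log_div (by positivity) (by positivity),
          ← Real.log_div (by positivity) (by positivity)]
      apply Real.log_le_log (by positivity)
      rw [div_le_div_iff₀ (by positivity) (by positivity)]
      nlinarith
    have h5 : Real.log (1 + t0) = 1/J := by
      have : (1:ℝ) + t0 = Real.exp (1/J) := by simp [ht0def]
      rw [this, Real.log_exp]
    linarith
end
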